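/- arXiv:1506.00910 — 2 statements merged into one kernel-verified Lean document; each statement's English description precedes it below -/
import Mathlib

section
/- Let V₀ and H₀ be real Hilbert spaces with V₀ continuously and densely embedded in H₀, let I ⊆ ℝ be an interval, let J₁ ∈ C¹(V₀) be such that its Fréchet derivative J₁' : V₀ → H₀ is locally Lipschitz, and let w ∈ C(I; V₀) ∩ C¹(I; H₀). Then J₁ ∘ w ∈ C¹(I) and (J₁ ∘ w)'(t) = (J₁'(w(t)), w'(t))_{H₀} for all t ∈ I. -/
/-!
No mollification is needed. Fix `t` and put `a = w t`. The mean value theorem applied to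
`θ ↦ J (a + θ • (v - a))`, whose derivative is `⟪g (a + θ • (v - a)), ι (v - a)⟫`, gives near `a`

  `|J v - J a - ⟪g a, ι (v - a)⟫| ≤ K ‖v - a‖ ‖ι v - ι a‖`,

with `K` a local Lipschitz constant of `g`. For `v = w s` the first factor tends to `0` because
`w` is continuous into `V`, and the second is `O(s - t)` because `ι ∘ w` is differentiable
into `H`; so the remainder is `o(s - t)`.
-/

open Filter Topology Asymptotics Set
open scoped InnerProductSpace

section ChainRule

variable {E F : Type*} [NormedAddCommGroup E] [NormedSpace ℝ E]
  [NormedAddCommGroup F] [InnerProductSpace ℝ F]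

theorem Convex.abs_sub_sub_inner_le_of_lipschitzOnWith {ι : E →L[ℝ] F} {J : E → ℝ}
    {g : E → F} {s : Set E} {K : NNReal} (hs : Convex ℝ s)
    (hJ : ∀ v ∈ s, HasFDerivAt J ((innerSL ℝ (g v)).comp ι) v) (hg : LipschitzOnWith K g s)
    {a v : E} (ha : a ∈ s) (hv : v ∈ s) :
    |J v - J a - ⟪g a, ι (v - a)⟫_ℝ| ≤ K * ‖v - a‖ * ‖ι (v - a)‖ := by
  set d := v - a
  have hseg : ∀ θ ∈ Icc (0 : ℝ) 1, a + θ • d ∈ s := fun θ hθ => hs.add_smul_sub_mem ha hv hθ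
  have hderiv : ∀ θ ∈ Icc (0 : ℝ) 1,
      HasDerivWithinAt (fun θ : ℝ => J (a + θ • d) - θ * ⟪g a, ι d⟫_ℝ)
        (⟪g (a + θ • d), ι d⟫_ℝ - ⟪g a, ι d⟫_ℝ) (Icc 0 1) θ := by
    intro θ hθ
    have hline : HasDerivAt (fun θ : ℝ => a + θ • d) d θ := by
      simpa using ((hasDerivAt_id θ).smul_const d).const_add a
    have hJline := (hJ _ (hseg θ hθ)).comp_hasDerivAt θ hline
    simp only [ContinuousLinearMap.comp_apply, innerSL_apply_apply] at hJline
    exact (hJline.sub (by simpa using (hasDerivAt_id θ).mul_const ⟪g a, ι d⟫_ℝ)).hasDerivWithinAt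
  have hbound : ∀ θ ∈ Ico (0 : ℝ) 1,
      ‖⟪g (a + θ • d), ι d⟫_ℝ - ⟪g a, ι d⟫_ℝ‖ ≤ K * ‖d‖ * ‖ι d‖ := by
    intro θ hθ
    have hθ' : θ ∈ Icc (0 : ℝ) 1 := Ico_subset_Icc_self hθ
    have hlip : ‖g (a + θ • d) - g a‖ ≤ K * ‖d‖ := calc
      ‖g (a + θ • d) - g a‖ ≤ K * ‖a + θ • d - a‖ := by
        simpa only [dist_eq_norm] using hg.dist_le_mul _ (hseg θ hθ') _ ha
      _ = K * (θ * ‖d‖) := by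
        rw [add_sub_cancel_left, norm_smul, Real.norm_of_nonneg hθ.1]
      _ ≤ K * ‖d‖ := by
        gcongr
        exact mul_le_of_le_one_left (norm_nonneg d) hθ.2.le
    calc ‖⟪g (a + θ • d), ι d⟫_ℝ - ⟪g a, ι d⟫_ℝ‖
        = ‖⟪g (a + θ • d) - g a, ι d⟫_ℝ‖ := by rw [inner_sub_left]
      _ ≤ ‖g (a + θ • d) - g a‖ * ‖ι d‖ := norm_inner_le_norm _ _
      _ ≤ K * ‖d‖ * ‖ι d‖ := by gcongr
  have hmvt := norm_image_sub_le_of_norm_deriv_le_segment_01' hderiv hbound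
  simp only [one_smul, zero_smul, add_zero, one_mul, zero_mul, sub_zero, d,
    add_sub_cancel, Real.norm_eq_abs] at hmvt
  rwa [sub_right_comm] at hmvt

theorem hasDerivWithinAt_zero_of_norm_sub_le_mul {G : Type*} [NormedAddCommGroup G]
    [NormedSpace ℝ G] {f : ℝ → E} {h : ℝ → G} {h' : G} {φ : ℝ → ℝ} {s : Set ℝ} {t : ℝ}
    (hh : HasDerivWithinAt h h' s t) (hφ : Tendsto φ (𝓝[s] t) (𝓝 0))
    (hf : ∀ᶠ x in 𝓝[s] t, ‖f x - f t‖ ≤ φ x * ‖h x - h t‖) :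
    HasDerivWithinAt f 0 s t := by
  rw [hasDerivWithinAt_iff_isLittleO]
  have hsmall : (fun x => φ x * ‖h x - h t‖) =o[𝓝[s] t] (fun x => x - t) := by
    simpa using ((isLittleO_one_iff ℝ).mpr hφ).mul_isBigO
      hh.hasFDerivWithinAt.isBigO_sub.norm_left
  refine (IsBigO.of_bound 1 ?_).trans_isLittleO hsmall
  filter_upwards [hf] with x hx
  simpa using hx.trans (le_abs_self _)

theorem HasDerivWithinAt.comp_of_hasFDerivAt_inner {ι : E →L[ℝ] F} {J : E → ℝ} {g : E → F}
    (hJ : ∀ v, HasFDerivAt J ((innerSL ℝ (g v)).comp ι) v) (hg : LocallyLipschitz g)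
    {w : ℝ → E} {w' : F} {s : Set ℝ} {t : ℝ} (hw : ContinuousWithinAt w s t)
    (hw' : HasDerivWithinAt (fun x => ι (w x)) w' s t) :
    HasDerivWithinAt (fun x => J (w x)) ⟪g (w t), w'⟫_ℝ s t := by
  obtain ⟨K, U, hU, hKU⟩ := hg (w t)
  obtain ⟨r, hr, hball⟩ := Metric.mem_nhds_iff.mp hU
  have hlinear : HasDerivWithinAt (fun x => ⟪g (w t), ι (w x)⟫_ℝ) ⟪g (w t), w'⟫_ℝ s t :=
    (innerSL ℝ (g (w t))).hasFDerivAt.comp_hasDerivWithinAt t hw'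
  have hremainder : HasDerivWithinAt (fun x => J (w x) - ⟪g (w t), ι (w x)⟫_ℝ) 0 s t := by
    refine hasDerivWithinAt_zero_of_norm_sub_le_mul hw' (φ := fun x => K * ‖w x - w t‖) ?_ ?_
    · simpa using (tendsto_iff_norm_sub_tendsto_zero.mp hw).const_mul (K : ℝ)
    · filter_upwards [hw (Metric.ball_mem_nhds (w t) hr)] with x hx
      have hmvt := (convex_ball (w t) r).abs_sub_sub_inner_le_of_lipschitzOnWith
        (fun v _ => hJ v) (hKU.mono hball) (Metric.mem_ball_self hr) hx
      rw [map_sub, inner_sub_right] at hmvt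
      rw [Real.norm_eq_abs]
      convert hmvt using 2
      ring
  simpa only [Pi.add_def, sub_add_cancel, zero_add] using hremainder.add hlinear

end ChainRule

theorem abstract_chain_rule_general {V H : Type*}
    [NormedAddCommGroup V] [InnerProductSpace ℝ V]
    [NormedAddCommGroup H] [InnerProductSpace ℝ H]
    (ι : V →L[ℝ] H)
    (J : V → ℝ) (g : V → H)
    (hJ : ∀ v : V, HasFDerivAt J (((innerSL ℝ (g v)).comp ι : V →L[ℝ] ℝ)) v)
    (hg : LocallyLipschitz g)
    (I : Set ℝ)
    (w : ℝ → V) (w' : ℝ → H)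
    (hw : ContinuousOn w I)
    (hw' : ∀ t ∈ I, HasDerivWithinAt (fun s => ι (w s)) (w' t) I t)
    (hw'c : ContinuousOn w' I) :
    (∀ t ∈ I, HasDerivWithinAt (fun s => J (w s)) (inner ℝ (g (w t)) (w' t) : ℝ) I t) ∧
    ContinuousOn (fun t => (inner ℝ (g (w t)) (w' t) : ℝ)) I :=
  ⟨fun t ht => HasDerivWithinAt.comp_of_hasFDerivAt_inner hJ hg (hw t ht) (hw' t ht),
    (hg.continuous.comp_continuousOn hw).inner hw'c⟩

/-- Abstract chain rule: if `V₀ ↪ H₀` densely, `J₁ ∈ C¹(V₀)` with Fréchet derivative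
represented by a locally Lipschitz gradient `g : V₀ → H₀`, and
`w ∈ C(I;V₀) ∩ C¹(I;H₀)`, then `J₁ ∘ w ∈ C¹(I)` with `(J₁∘w)' = (g(w), w')_{H₀}`. -/
theorem abstract_chain_rule {V H : Type*}
    [NormedAddCommGroup V] [InnerProductSpace ℝ V] [CompleteSpace V]
    [NormedAddCommGroup H] [InnerProductSpace ℝ H] [CompleteSpace H]
    (ι : V →L[ℝ] H) (hinj : Function.Injective ι) (hdense : DenseRange ι)
    (J : V → ℝ) (g : V → H)
    (hJ : ∀ v : V, HasFDerivAt J (((innerSL ℝ (g v)).comp ι : V →L[ℝ] ℝ)) v)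
    (hg : LocallyLipschitz g)
    (I : Set ℝ) (hI : I.OrdConnected)
    (w : ℝ → V) (w' : ℝ → H)
    (hw : ContinuousOn w I)
    (hw' : ∀ t ∈ I, HasDerivWithinAt (fun s => ι (w s)) (w' t) I t)
    (hw'c : ContinuousOn w' I) :
    (∀ t ∈ I, HasDerivWithinAt (fun s => J (w s)) (inner ℝ (g (w t)) (w' t) : ℝ) I t) ∧
    ContinuousOn (fun t => (inner ℝ (g (w t)) (w' t) : ℝ)) I :=
  abstract_chain_rule_general ι J g hJ hg I w w' hw hw' hw'c
end

section
/- Let ρ ∈ (1, ∞) and let u : ℝⁿ → ℂ be a C² function with compact support. Then Re ∫ −Δu · |u|^{ρ−2} ū dx ≥ 0. -/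
/-!
Regularize the duality map `z ↦ |z|^{ρ-2} z̄` of `L^ρ` to `φ_ε z = (|z|² + ε)^{(ρ-2)/2} z̄`, which
is smooth for `ε > 0`. Integrating by parts, `∫ -Δu · φ_ε(u)` is a sum of integrals of
`Dφ_ε(u)(∂ᵢu) · ∂ᵢu`, and for all `z, h` the real part of `Dφ_ε(z)h · h` equals
`(|z|² + ε)^{(ρ-4)/2} ((ρ - 1) v² + (|z|² + ε)|h|² - v²)` with `v = Re(h z̄)`, which is
nonnegative because `v² ≤ |z|²|h|²`. Dominated convergence as `ε → 0⁺` gives the claim.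
-/

open MeasureTheory

/-- The Euclidean Laplacian of a function `u : ℝⁿ → ℂ`. -/
noncomputable def lap {n : ℕ} (u : EuclideanSpace ℝ (Fin n) → ℂ)
    (x : EuclideanSpace ℝ (Fin n)) : ℂ :=
  ∑ i : Fin n,
    fderiv ℝ (fun y => fderiv ℝ u y (EuclideanSpace.single i (1:ℝ))) x
      (EuclideanSpace.single i (1:ℝ))

open Filter Topology

lemma re_integral_nonneg {X : Type*} [MeasurableSpace X] {μ : Measure X} {f : X → ℂ}
    (hf : ∀ x, 0 ≤ (f x).re) : 0 ≤ (∫ x, f x ∂μ).re := by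
  by_cases h : Integrable f μ
  · rw [← RCLike.re_to_complex, ← integral_re h]
    exact integral_nonneg hf
  · simp [integral_undef h]

lemma sq_rpow_div_two {a : ℝ} (ha : 0 ≤ a) (q : ℝ) : (a ^ 2) ^ (q / 2) = a ^ q := by
  rw [← Real.rpow_natCast_mul ha]
  congr 1
  push_cast
  ring

/-- The regularization `(|z|² + ε)^{(ρ-2)/2} z̄` of the duality map `z ↦ |z|^{ρ-2} z̄` of `L^ρ`. -/
noncomputable def regDual (ρ ε : ℝ) (z : ℂ) : ℂ :=
  ((‖z‖ ^ 2 + ε) ^ ((ρ - 2) / 2) : ℝ) * starRingEnd ℂ z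

namespace regDual

variable {ρ ε : ℝ}

@[simp]
lemma apply_zero : regDual ρ ε 0 = 0 := by
  simp [regDual]

lemma contDiff (hε : 0 < ε) {k : WithTop ℕ∞} : ContDiff ℝ k (regDual ρ ε) :=
  (Complex.ofRealCLM.contDiff.comp (((contDiff_norm_sq ℝ).add contDiff_const).rpow_const_of_ne
    fun z => by positivity)).mul Complex.conjCLE.contDiff

lemma fderiv_apply (hε : 0 < ε) (z h : ℂ) :
    fderiv ℝ (regDual ρ ε) z h =
      ((‖z‖ ^ 2 + ε) ^ ((ρ - 2) / 2) : ℝ) * starRingEnd ℂ h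
        + ((ρ - 2) * (‖z‖ ^ 2 + ε) ^ ((ρ - 2) / 2 - 1) * (h * starRingEnd ℂ z).re : ℝ)
          * starRingEnd ℂ z := by
  have hA : HasFDerivAt (fun w : ℂ => ‖w‖ ^ 2 + ε) (2 • innerSL ℝ z) z :=
    (hasStrictFDerivAt_norm_sq z).hasFDerivAt.add_const ε
  have hφ : HasFDerivAt (regDual ρ ε) _ z := (Complex.ofRealCLM.hasFDerivAt.comp z
    (hA.rpow_const (p := (ρ - 2) / 2) (Or.inl (by positivity)))).mul
    Complex.conjCLE.hasFDerivAt
  rw [hφ.fderiv]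
  simp only [Function.comp_apply, Complex.ofRealCLM_apply, add_apply,
    smul_apply, ContinuousLinearEquiv.coe_coe, Complex.conjCLE_apply,
    ContinuousLinearMap.comp_apply, smul_eq_mul, nsmul_eq_mul, coe_innerSL_apply, Complex.inner]
  push_cast
  ring

lemma re_fderiv_apply_mul_self_nonneg (hρ : 1 ≤ ρ) (hε : 0 < ε) (z h : ℂ) :
    0 ≤ (fderiv ℝ (regDual ρ ε) z h * h).re := by
  set A := ‖z‖ ^ 2 + ε
  set v := (h * starRingEnd ℂ z).re
  have hA : 0 < A := by positivity
  have hv : v ^ 2 ≤ ‖z‖ ^ 2 * ‖h‖ ^ 2 := by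
    have := Complex.abs_re_le_norm (h * starRingEnd ℂ z)
    rw [norm_mul, Complex.norm_conj] at this
    nlinarith [abs_nonneg v, sq_abs v]
  have hre : (fderiv ℝ (regDual ρ ε) z h * h).re
      = A ^ ((ρ - 2) / 2 - 1) * ((ρ - 1) * v ^ 2 + (A * ‖h‖ ^ 2 - v ^ 2)) := by
    rw [fderiv_apply hε, add_mul, Complex.add_re, mul_assoc, mul_assoc, Complex.re_ofReal_mul,
      Complex.re_ofReal_mul, Complex.conj_mul', mul_comm (starRingEnd ℂ z),
      Real.rpow_sub_one hA.ne']
    norm_cast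
    field_simp
    ring
  rw [hre]
  have : 0 ≤ A * ‖h‖ ^ 2 - v ^ 2 := by nlinarith [sq_nonneg ‖h‖]
  exact mul_nonneg (by positivity) (add_nonneg (by nlinarith [sq_nonneg v]) this)

lemma norm_eq (hε : 0 ≤ ε) (z : ℂ) :
    ‖regDual ρ ε z‖ = (‖z‖ ^ 2 + ε) ^ ((ρ - 2) / 2) * ‖z‖ := by
  rw [regDual, norm_mul, Complex.norm_real, Complex.norm_conj, Real.norm_eq_abs,
    abs_of_nonneg (by positivity)]

lemma norm_le (hε : 0 ≤ ε) (hε₁ : ε ≤ 1) (z : ℂ) :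
    ‖regDual ρ ε z‖ ≤ (‖z‖ ^ 2 + 1) ^ ((ρ - 2) / 2) * ‖z‖ + ‖z‖ ^ (ρ - 1) := by
  rw [norm_eq hε]
  rcases le_or_gt 2 ρ with hρ | hρ
  · have : (‖z‖ ^ 2 + ε) ^ ((ρ - 2) / 2) ≤ (‖z‖ ^ 2 + 1) ^ ((ρ - 2) / 2) :=
      Real.rpow_le_rpow (by positivity) (by linarith) (by linarith)
    have : 0 ≤ ‖z‖ ^ (ρ - 1) := by positivity
    nlinarith [norm_nonneg z]
  rcases eq_or_ne z 0 with rfl | hz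
  · simp only [norm_zero, mul_zero]
    positivity
  have hz' : 0 < ‖z‖ := norm_pos_iff.mpr hz
  calc (‖z‖ ^ 2 + ε) ^ ((ρ - 2) / 2) * ‖z‖
      ≤ (‖z‖ ^ 2) ^ ((ρ - 2) / 2) * ‖z‖ := by
        refine mul_le_mul_of_nonneg_right ?_ (norm_nonneg z)
        exact Real.rpow_le_rpow_of_nonpos (by positivity) (le_add_of_nonneg_right hε)
          (by linarith)
    _ = ‖z‖ ^ (ρ - 1) := by
        rw [sq_rpow_div_two hz'.le, ← Real.rpow_add_one hz'.ne']
        ring_nf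
    _ ≤ _ := le_add_of_nonneg_left (by positivity)

lemma tendsto_nhdsGT_zero (z : ℂ) :
    Tendsto (fun ε => regDual ρ ε z) (𝓝[>] 0) (𝓝 ((‖z‖ ^ (ρ - 2) : ℝ) * starRingEnd ℂ z)) := by
  rcases eq_or_ne z 0 with rfl | hz
  · simp
  have hcont : ContinuousAt (fun ε => regDual ρ ε z) 0 := by
    refine (Complex.continuous_ofReal.continuousAt.comp ?_).mul continuousAt_const
    exact (continuousAt_const.add continuousAt_id).rpow_const (Or.inl (by simpa using hz))
  simpa [regDual, sq_rpow_div_two (norm_nonneg z)] using hcont.tendsto.mono_left nhdsWithin_le_nhds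

end regDual

section DominatedConvergence

variable {X : Type*} [TopologicalSpace X] [MeasurableSpace X] [OpensMeasurableSpace X]
  {μ : Measure X} [IsFiniteMeasureOnCompacts μ]

lemma tendsto_integral_mul_regDual {ρ : ℝ} (hρ : 1 < ρ) {F u : X → ℂ} (hF : Continuous F)
    (hu : Continuous u) (hus : HasCompactSupport u) :
    Tendsto (fun ε => ∫ x, F x * regDual ρ ε (u x) ∂μ) (𝓝[>] 0)
      (𝓝 (∫ x, F x * ((‖u x‖ ^ (ρ - 2) : ℝ) * starRingEnd ℂ (u x)) ∂μ)) := by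
  set B : ℂ → ℝ := fun z => (‖z‖ ^ 2 + 1) ^ ((ρ - 2) / 2) * ‖z‖ + ‖z‖ ^ (ρ - 1)
  have hB : Continuous B := by
    have : Continuous fun z : ℂ => (‖z‖ ^ 2 + 1) ^ ((ρ - 2) / 2) :=
      Continuous.rpow_const (by fun_prop) fun z => Or.inl (by positivity)
    exact (this.mul continuous_norm).add (continuous_norm.rpow_const fun _ => Or.inr (by linarith))
  have hBu : HasCompactSupport (B ∘ u) :=
    hus.comp_left (by simp [B, Real.zero_rpow (by linarith : ρ - 1 ≠ 0)])
  refine tendsto_integral_filter_of_dominated_convergence (fun x => ‖F x‖ * B (u x)) ?_ ?_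
    ((hF.norm.mul (hB.comp hu)).integrable_of_hasCompactSupport hBu.mul_left) ?_
  · filter_upwards [self_mem_nhdsWithin] with ε hε
    exact (hF.mul ((regDual.contDiff hε (k := 0)).continuous.comp hu)).aestronglyMeasurable
  · filter_upwards [Ioc_mem_nhdsGT one_pos] with ε hε
    exact .of_forall fun x => by
      rw [norm_mul]
      exact mul_le_mul_of_nonneg_left (regDual.norm_le hε.1.le hε.2 (u x)) (norm_nonneg _)
  · exact .of_forall fun x => (regDual.tendsto_nhdsGT_zero (u x)).const_mul (F x)

end DominatedConvergence

section IntegrationByParts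

variable {E : Type*} [NormedAddCommGroup E] [NormedSpace ℝ E]

lemma ContDiff.contDiff_fderiv_apply_const {u : E → ℂ} (hu : ContDiff ℝ 2 u) (v : E) :
    ContDiff ℝ 1 fun y => fderiv ℝ u y v :=
  (hu.fderiv_right (by norm_num)).clm_apply contDiff_const

lemma ContDiff.continuous_fderiv_apply_const {f : E → ℂ} (hf : ContDiff ℝ 1 f) (v : E) :
    Continuous fun y => fderiv ℝ f y v :=
  (hf.continuous_fderiv one_ne_zero).clm_apply continuous_const

variable [FiniteDimensional ℝ E] [MeasurableSpace E] [BorelSpace E] {μ : Measure E}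
  [μ.IsAddHaarMeasure]

lemma integral_mul_fderiv_fderiv_eq_neg {u φ : E → ℂ} (hu : ContDiff ℝ 2 u)
    (hφ : ContDiff ℝ 1 φ) (hφs : HasCompactSupport φ) (v : E) :
    ∫ x, φ x * fderiv ℝ (fun y => fderiv ℝ u y v) x v ∂μ
      = -∫ x, fderiv ℝ φ x v * fderiv ℝ u x v ∂μ := by
  have hd := hu.contDiff_fderiv_apply_const v
  have hφ's : HasCompactSupport fun x => fderiv ℝ φ x v :=
    (hφs.fderiv ℝ).comp_left (g := fun L : E →L[ℝ] ℂ => L v) rfl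
  exact integral_mul_fderiv_eq_neg_fderiv_mul_of_integrable
    (((hφ.continuous_fderiv_apply_const v).mul hd.continuous).integrable_of_hasCompactSupport
      hφ's.mul_right)
    ((hφ.continuous.mul (hd.continuous_fderiv_apply_const v)).integrable_of_hasCompactSupport
      hφs.mul_right)
    ((hφ.continuous.mul hd.continuous).integrable_of_hasCompactSupport hφs.mul_right)
    (fun x _ => hφ.differentiable one_ne_zero x) (fun x _ => hd.differentiable one_ne_zero x)

end IntegrationByParts

section Laplacian

variable {n : ℕ}

lemma continuous_lap {u : EuclideanSpace ℝ (Fin n) → ℂ} (hu : ContDiff ℝ 2 u) :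
    Continuous (lap u) :=
  continuous_finsetSum _ fun _ _ =>
    (hu.contDiff_fderiv_apply_const _).continuous_fderiv_apply_const _

lemma integral_neg_lap_mul {u φ : EuclideanSpace ℝ (Fin n) → ℂ} (hu : ContDiff ℝ 2 u)
    (hφ : ContDiff ℝ 1 φ) (hφs : HasCompactSupport φ) :
    ∫ x, -lap u x * φ x = ∑ i, ∫ x, fderiv ℝ φ x (EuclideanSpace.single i 1)
      * fderiv ℝ u x (EuclideanSpace.single i 1) := by
  have hint : ∀ i ∈ Finset.univ, Integrable fun x => φ x
      * fderiv ℝ (fun y => fderiv ℝ u y (EuclideanSpace.single i (1 : ℝ))) x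
        (EuclideanSpace.single i 1) := fun i _ =>
    (hφ.continuous.mul ((hu.contDiff_fderiv_apply_const _).continuous_fderiv_apply_const _)
      ).integrable_of_hasCompactSupport hφs.mul_right
  simp_rw [lap, neg_mul, Finset.sum_mul, mul_comm _ (φ _)]
  rw [integral_neg, integral_finsetSum _ hint, ← Finset.sum_neg_distrib]
  simp_rw [integral_mul_fderiv_fderiv_eq_neg hu hφ hφs, neg_neg]

lemma re_integral_neg_lap_mul_regDual_nonneg {ρ ε : ℝ} (hρ : 1 ≤ ρ) (hε : 0 < ε)
    {u : EuclideanSpace ℝ (Fin n) → ℂ} (hu : ContDiff ℝ 2 u) (hus : HasCompactSupport u) :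
    0 ≤ (∫ x, -lap u x * regDual ρ ε (u x)).re := by
  have hφ : ContDiff ℝ 1 (regDual ρ ε ∘ u) := (regDual.contDiff hε).comp (hu.of_le one_le_two)
  change 0 ≤ (∫ x, -lap u x * (regDual ρ ε ∘ u) x).re
  rw [integral_neg_lap_mul hu hφ (hus.comp_left regDual.apply_zero), Complex.re_sum]
  refine Finset.sum_nonneg fun i _ => re_integral_nonneg fun x => ?_
  rw [fderiv_comp x ((regDual.contDiff hε).differentiable one_ne_zero _)
    ((hu.differentiable two_ne_zero) x)]
  exact regDual.re_fderiv_apply_mul_self_nonneg hρ hε _ _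

end Laplacian

/-- Accretivity of `−Δ` in `L^ρ`: `Re ∫ −Δu · |u|^{ρ−2} ū ≥ 0` for `u ∈ C²_c(ℝⁿ;ℂ)`. -/
theorem laplacian_accretive {n : ℕ} (ρ : ℝ) (hρ : 1 < ρ)
    (u : EuclideanSpace ℝ (Fin n) → ℂ) (hu : ContDiff ℝ 2 u)
    (hsupp : HasCompactSupport u) :
    0 ≤ (∫ x, (-(lap u x)) * ((‖u x‖ ^ (ρ - 2) : ℝ) : ℂ)
        * (starRingEnd ℂ (u x))).re := by
  have hlim := tendsto_integral_mul_regDual (μ := volume) hρ (continuous_lap hu).neg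
    hu.continuous hsupp
  simp_rw [mul_assoc]
  refine ge_of_tendsto (Complex.continuous_re.continuousAt.tendsto.comp hlim) ?_
  filter_upwards [self_mem_nhdsWithin] with ε hε
  exact re_integral_neg_lap_mul_regDual_nonneg hρ.le hε hu hsupp
end
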